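/- arXiv:2405.09970 — 6 statements merged into one kernel-verified Lean document; each statement's English description precedes it below -/
import Mathlib

section
/- In the cut-free calculus GwIKt†, the left conjunction rule is height-preserving invertible: for all n ≥ 1, if Γ[α₁∧α₂] ⇒ β is derivable with a derivation of height n, then Γ[α₁, α₂] ⇒ β is derivable with a derivation of height at most n. -/
/-- Formulas of weak intuitionistic tense logic. -/
inductive Fml : Type
  | var : ℕ → Fml
  | top : Fml
  | bot : Fml
  | imp : Fml → Fml → Fml
  | and : Fml → Fml → Fml
  | or  : Fml → Fml → Fml
  | dia : Fml → Fml   -- ◇ (future diamond)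
  | box : Fml → Fml   -- □ (future box)
  | bdia : Fml → Fml  -- ◆ (past diamond)
  | bbox : Fml → Fml  -- ■ (past box)

/-- Atomic formulas: variables, ⊤, ⊥. -/
def Fml.Atomic : Fml → Prop
  | .var _ => True
  | .top => True
  | .bot => True
  | _ => False

/-- Formula structures: formulas closed under comma, ∘, •. -/
inductive FS : Type
  | fml : Fml → FS
  | comma : FS → FS → FS
  | circ : FS → FS    -- ∘, structural ◇
  | bullet : FS → FS  -- •, structural ◆

/-- Single-hole contexts. -/
inductive Ctx : Type
  | hole : Ctx
  | commaL : Ctx → FS → Ctx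
  | commaR : FS → Ctx → Ctx
  | circ : Ctx → Ctx
  | bullet : Ctx → Ctx

/-- Fill the hole of a context with a structure. -/
def Ctx.plug : Ctx → FS → FS
  | .hole, Δ => Δ
  | .commaL C Γ, Δ => .comma (C.plug Δ) Γ
  | .commaR Γ C, Δ => .comma Γ (C.plug Δ)
  | .circ C, Δ => .circ (C.plug Δ)
  | .bullet C, Δ => .bullet (C.plug Δ)

/-- Multi-hole contexts (for the mix rules Γ[·]ⁿ). -/
inductive MCtx : Type
  | hole : MCtx
  | fml : Fml → MCtx
  | comma : MCtx → MCtx → MCtx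
  | circ : MCtx → MCtx
  | bullet : MCtx → MCtx

/-- Fill all holes of a multi-context with the same structure. -/
def MCtx.plug : MCtx → FS → FS
  | .hole, Δ => Δ
  | .fml α, _ => .fml α
  | .comma C D, Δ => .comma (C.plug Δ) (D.plug Δ)
  | .circ C, Δ => .circ (C.plug Δ)
  | .bullet C, Δ => .bullet (C.plug Δ)

/-- Number n of designated occurrences in Γ[·]ⁿ. -/
def MCtx.holes : MCtx → ℕ
  | .hole => 1
  | .fml _ => 0
  | .comma C D => C.holes + D.holes
  | .circ C => C.holes
  | .bullet C => C.holes

/-- Cut formulas allowed in (Cut_*): not atomic, not □- or ■-formulas, not implications. -/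
def Fml.Starish (α : Fml) : Prop :=
  ¬ α.Atomic ∧ (∀ a, α ≠ .box a) ∧ (∀ a, α ≠ .bbox a) ∧ (∀ a b, α ≠ .imp a b)

/-- Flags selecting the variant of the calculus:
`idFull`: unrestricted identity axiom (Id) vs atomic (Id_A);
`conF`: full formula contraction (Con_F) vs the restricted contractions
(Con_A), (Con_□), (Con_■), (Con_→);
`cut`: the single cut rule (Cut);
`mix`: the four cut-like rules (Mix_A), (Mix_□), (Mix_■), (Mix_→), (Cut_*). -/
structure Rules where
  idFull : Bool
  conF : Bool
  cut : Bool
  mix : Bool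

/-- `DerH R n Γ β`: the sequent Γ ⇒ β has a derivation of height at most `n`
in the calculus determined by `R`. -/
inductive DerH (R : Rules) : ℕ → FS → Fml → Prop
  -- (Id_A)
  | idA (n : ℕ) (α : Fml) : 1 ≤ n → α.Atomic → DerH R n (.fml α) α
  -- (Id), only in calculi with unrestricted identity
  | idF (n : ℕ) (α : Fml) : R.idFull = true → 1 ≤ n → DerH R n (.fml α) α
  -- (⊤)
  | topL (n : ℕ) (Γ : Ctx) (Δ : FS) (β : Fml) :
      DerH R n (Γ.plug (.fml .top)) β → DerH R (n + 1) (Γ.plug Δ) β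
  -- (⊥)
  | botL (n : ℕ) (Γ : Ctx) (Δ : FS) (β : Fml) :
      DerH R n Δ .bot → DerH R (n + 1) (Γ.plug Δ) β
  -- (∧L)
  | andL (n : ℕ) (Γ : Ctx) (α₁ α₂ β : Fml) :
      DerH R n (Γ.plug (.comma (.fml α₁) (.fml α₂))) β →
      DerH R (n + 1) (Γ.plug (.fml (α₁.and α₂))) β
  -- (∧R)
  | andR (n : ℕ) (Γ : FS) (β₁ β₂ : Fml) :
      DerH R n Γ β₁ → DerH R n Γ β₂ → DerH R (n + 1) Γ (β₁.and β₂)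
  -- (∨L)
  | orL (n : ℕ) (Γ : Ctx) (α₁ α₂ β : Fml) :
      DerH R n (Γ.plug (.fml α₁)) β → DerH R n (Γ.plug (.fml α₂)) β →
      DerH R (n + 1) (Γ.plug (.fml (α₁.or α₂))) β
  -- (∨R), i = 1
  | orR₁ (n : ℕ) (Γ : FS) (β₁ β₂ : Fml) :
      DerH R n Γ β₁ → DerH R (n + 1) Γ (β₁.or β₂)
  -- (∨R), i = 2
  | orR₂ (n : ℕ) (Γ : FS) (β₁ β₂ : Fml) :
      DerH R n Γ β₂ → DerH R (n + 1) Γ (β₁.or β₂)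
  -- (→L)
  | impL (n : ℕ) (Γ : Ctx) (Δ : FS) (α₁ α₂ β : Fml) :
      DerH R n Δ α₁ → DerH R n (Γ.plug (.fml α₂)) β →
      DerH R (n + 1) (Γ.plug (.comma Δ (.fml (α₁.imp α₂)))) β
  -- (→R)
  | impR (n : ℕ) (Γ : FS) (β₁ β₂ : Fml) :
      DerH R n (.comma (.fml β₁) Γ) β₂ → DerH R (n + 1) Γ (β₁.imp β₂)
  -- (◇L)
  | diaL (n : ℕ) (Γ : Ctx) (α β : Fml) :
      DerH R n (Γ.plug (.circ (.fml α))) β → DerH R (n + 1) (Γ.plug (.fml (α.dia))) β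
  -- (◇R)
  | diaR (n : ℕ) (Γ : FS) (β : Fml) :
      DerH R n Γ β → DerH R (n + 1) (.circ Γ) (β.dia)
  -- (◆L)
  | bdiaL (n : ℕ) (Γ : Ctx) (α β : Fml) :
      DerH R n (Γ.plug (.bullet (.fml α))) β → DerH R (n + 1) (Γ.plug (.fml (α.bdia))) β
  -- (◆R)
  | bdiaR (n : ℕ) (Γ : FS) (β : Fml) :
      DerH R n Γ β → DerH R (n + 1) (.bullet Γ) (β.bdia)
  -- (■L)
  | bboxL (n : ℕ) (Γ : Ctx) (α β : Fml) :
      DerH R n (Γ.plug (.fml α)) β → DerH R (n + 1) (Γ.plug (.circ (.fml (α.bbox)))) β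
  -- (■R)
  | bboxR (n : ℕ) (Γ : FS) (β : Fml) :
      DerH R n (.circ Γ) β → DerH R (n + 1) Γ (β.bbox)
  -- (□L)
  | boxL (n : ℕ) (Γ : Ctx) (α β : Fml) :
      DerH R n (Γ.plug (.fml α)) β → DerH R (n + 1) (Γ.plug (.bullet (.fml (α.box)))) β
  -- (□R)
  | boxR (n : ℕ) (Γ : FS) (β : Fml) :
      DerH R n (.bullet Γ) β → DerH R (n + 1) Γ (β.box)
  -- (Con∘)
  | conCirc (n : ℕ) (Γ : Ctx) (Δ₁ Δ₂ : FS) (β : Fml) :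
      DerH R n (Γ.plug (.comma (.circ Δ₁) (.circ Δ₂))) β →
      DerH R (n + 1) (Γ.plug (.circ (.comma Δ₁ Δ₂))) β
  -- (Con•)
  | conBullet (n : ℕ) (Γ : Ctx) (Δ₁ Δ₂ : FS) (β : Fml) :
      DerH R n (Γ.plug (.comma (.bullet Δ₁) (.bullet Δ₂))) β →
      DerH R (n + 1) (Γ.plug (.bullet (.comma Δ₁ Δ₂))) β
  -- (Con_F), only with full contraction
  | conF (n : ℕ) (Γ : Ctx) (α β : Fml) : R.conF = true →
      DerH R n (Γ.plug (.comma (.fml α) (.fml α))) β →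
      DerH R (n + 1) (Γ.plug (.fml α)) β
  -- (Con_A), only in the restricted calculi
  | conA (n : ℕ) (Γ : Ctx) (α β : Fml) : R.conF = false → α.Atomic →
      DerH R n (Γ.plug (.comma (.fml α) (.fml α))) β →
      DerH R (n + 1) (Γ.plug (.fml α)) β
  -- (Con_□)
  | conBox (n : ℕ) (Γ : Ctx) (α β : Fml) : R.conF = false →
      DerH R n (Γ.plug (.comma (.fml α.box) (.fml α.box))) β →
      DerH R (n + 1) (Γ.plug (.fml α.box)) β
  -- (Con_■)
  | conBBox (n : ℕ) (Γ : Ctx) (α β : Fml) : R.conF = false →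
      DerH R n (Γ.plug (.comma (.fml α.bbox) (.fml α.bbox))) β →
      DerH R (n + 1) (Γ.plug (.fml α.bbox)) β
  -- (Con_→)
  | conImp (n : ℕ) (Γ : Ctx) (α₁ α₂ β : Fml) : R.conF = false →
      DerH R n (Γ.plug (.comma (.fml (α₁.imp α₂)) (.fml (α₁.imp α₂)))) β →
      DerH R (n + 1) (Γ.plug (.fml (α₁.imp α₂))) β
  -- (Wk), i = 1
  | wk₁ (n : ℕ) (Γ : Ctx) (Δ₁ Δ₂ : FS) (β : Fml) :
      DerH R n (Γ.plug Δ₁) β → DerH R (n + 1) (Γ.plug (.comma Δ₁ Δ₂)) β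
  -- (Wk), i = 2
  | wk₂ (n : ℕ) (Γ : Ctx) (Δ₁ Δ₂ : FS) (β : Fml) :
      DerH R n (Γ.plug Δ₂) β → DerH R (n + 1) (Γ.plug (.comma Δ₁ Δ₂)) β
  -- (Ex)
  | ex (n : ℕ) (Γ : Ctx) (Δ₁ Δ₂ : FS) (β : Fml) :
      DerH R n (Γ.plug (.comma Δ₁ Δ₂)) β → DerH R (n + 1) (Γ.plug (.comma Δ₂ Δ₁)) β
  -- (Dual∘•)
  | dualCB (n : ℕ) (Γ : Ctx) (Δ₁ Δ₂ : FS) (β : Fml) :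
      DerH R n (.comma (.circ Δ₁) Δ₂) .bot →
      DerH R (n + 1) (Γ.plug (.comma Δ₁ (.bullet Δ₂))) β
  -- (Dual•∘)
  | dualBC (n : ℕ) (Γ : Ctx) (Δ₁ Δ₂ : FS) (β : Fml) :
      DerH R n (.comma (.bullet Δ₁) Δ₂) .bot →
      DerH R (n + 1) (Γ.plug (.comma Δ₁ (.circ Δ₂))) β
  -- (Cut)
  | cut (n : ℕ) (Γ : Ctx) (Δ : FS) (α β : Fml) : R.cut = true →
      DerH R n Δ α → DerH R n (Γ.plug (.fml α)) β → DerH R (n + 1) (Γ.plug Δ) β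
  -- (Mix_A)
  | mixA (n : ℕ) (Γ : MCtx) (Δ : FS) (α β : Fml) : R.mix = true →
      α.Atomic → 1 ≤ Γ.holes →
      DerH R n Δ α → DerH R n (Γ.plug (.fml α)) β → DerH R (n + 1) (Γ.plug Δ) β
  -- (Mix_□)
  | mixBox (n : ℕ) (Γ : MCtx) (Δ : FS) (α β : Fml) : R.mix = true →
      1 ≤ Γ.holes →
      DerH R n Δ α.box → DerH R n (Γ.plug (.fml α.box)) β → DerH R (n + 1) (Γ.plug Δ) β
  -- (Mix_■)
  | mixBBox (n : ℕ) (Γ : MCtx) (Δ : FS) (α β : Fml) : R.mix = true →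
      1 ≤ Γ.holes →
      DerH R n Δ α.bbox → DerH R n (Γ.plug (.fml α.bbox)) β → DerH R (n + 1) (Γ.plug Δ) β
  -- (Mix_→)
  | mixImp (n : ℕ) (Γ : MCtx) (Δ : FS) (α₁ α₂ β : Fml) : R.mix = true →
      1 ≤ Γ.holes →
      DerH R n Δ (α₁.imp α₂) → DerH R n (Γ.plug (.fml (α₁.imp α₂))) β →
      DerH R (n + 1) (Γ.plug Δ) β
  -- (Cut_*)
  | cutStar (n : ℕ) (Γ : Ctx) (Δ : FS) (α β : Fml) : R.mix = true →
      α.Starish →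
      DerH R n Δ α → DerH R n (Γ.plug (.fml α)) β → DerH R (n + 1) (Γ.plug Δ) β

/-- Derivability (some height). -/
def Der (R : Rules) (Γ : FS) (β : Fml) : Prop := ∃ n, DerH R n Γ β

/-- GwIKt: full identity, full contraction, with cut. -/
def GwIKt : Rules := ⟨true, true, true, false⟩
/-- GwIKt without the cut rule. -/
def GwIKtCF : Rules := ⟨true, true, false, false⟩
/-- GwIKt† : atomic identity, restricted contractions, with cut. -/
def GwIKtD : Rules := ⟨false, false, true, false⟩
/-- cut-free GwIKt†. -/
def GwIKtDCF : Rules := ⟨false, false, false, false⟩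
/-- GwIKt‡ : cut replaced by the four cut-like rules. -/
def GwIKtDD : Rules := ⟨false, false, false, true⟩

/-! Invertibility is proved for the simultaneous splitting of any set of occurrences of `a ∧ b`
into `a, b`, possibly empty: weakening may delete the tracked occurrence, and exchange, (Con∘) and
(Con•) move it, so only this more general claim survives an induction on the derivation. Since
identity is atomic and no contraction acts on a conjunction, (∧L) is the only rule that can have a
split occurrence as principal formula, and its premise is then already the split sequent, one step
lower. Every other rule, cut included, is reapplied to the split premises. -/

theorem DerH.succ {R : Rules} {n : ℕ} {Γ : FS} {β : Fml} (h : DerH R n Γ β) :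
    DerH R (n + 1) Γ β := by
  induction h with
  | idA _ _ h ha => exact .idA _ _ (by omega) ha
  | idF _ _ hf h => exact .idF _ _ hf (by omega)
  | topL _ _ _ _ _ ih => exact .topL _ _ _ _ ih
  | botL _ _ _ _ _ ih => exact .botL _ _ _ _ ih
  | andL _ _ _ _ _ _ ih => exact .andL _ _ _ _ _ ih
  | andR _ _ _ _ _ _ ih₁ ih₂ => exact .andR _ _ _ _ ih₁ ih₂
  | orL _ _ _ _ _ _ _ ih₁ ih₂ => exact .orL _ _ _ _ _ ih₁ ih₂
  | orR₁ _ _ _ _ _ ih => exact .orR₁ _ _ _ _ ih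
  | orR₂ _ _ _ _ _ ih => exact .orR₂ _ _ _ _ ih
  | impL _ _ _ _ _ _ _ _ ih₁ ih₂ => exact .impL _ _ _ _ _ _ ih₁ ih₂
  | impR _ _ _ _ _ ih => exact .impR _ _ _ _ ih
  | diaL _ _ _ _ _ ih => exact .diaL _ _ _ _ ih
  | diaR _ _ _ _ ih => exact .diaR _ _ _ ih
  | bdiaL _ _ _ _ _ ih => exact .bdiaL _ _ _ _ ih
  | bdiaR _ _ _ _ ih => exact .bdiaR _ _ _ ih
  | bboxL _ _ _ _ _ ih => exact .bboxL _ _ _ _ ih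
  | bboxR _ _ _ _ ih => exact .bboxR _ _ _ ih
  | boxL _ _ _ _ _ ih => exact .boxL _ _ _ _ ih
  | boxR _ _ _ _ ih => exact .boxR _ _ _ ih
  | conCirc _ _ _ _ _ _ ih => exact .conCirc _ _ _ _ _ ih
  | conBullet _ _ _ _ _ _ ih => exact .conBullet _ _ _ _ _ ih
  | conF _ _ _ _ hf _ ih => exact .conF _ _ _ _ hf ih
  | conA _ _ _ _ hf ha _ ih => exact .conA _ _ _ _ hf ha ih
  | conBox _ _ _ _ hf _ ih => exact .conBox _ _ _ _ hf ih
  | conBBox _ _ _ _ hf _ ih => exact .conBBox _ _ _ _ hf ih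
  | conImp _ _ _ _ _ hf _ ih => exact .conImp _ _ _ _ _ hf ih
  | wk₁ _ _ _ _ _ _ ih => exact .wk₁ _ _ _ _ _ ih
  | wk₂ _ _ _ _ _ _ ih => exact .wk₂ _ _ _ _ _ ih
  | ex _ _ _ _ _ _ ih => exact .ex _ _ _ _ _ ih
  | dualCB _ _ _ _ _ _ ih => exact .dualCB _ _ _ _ _ ih
  | dualBC _ _ _ _ _ _ ih => exact .dualBC _ _ _ _ _ ih
  | cut _ _ _ _ _ hf _ _ ih₁ ih₂ => exact .cut _ _ _ _ _ hf ih₁ ih₂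
  | mixA _ _ _ _ _ hf ha hh _ _ ih₁ ih₂ => exact .mixA _ _ _ _ _ hf ha hh ih₁ ih₂
  | mixBox _ _ _ _ _ hf hh _ _ ih₁ ih₂ => exact .mixBox _ _ _ _ _ hf hh ih₁ ih₂
  | mixBBox _ _ _ _ _ hf hh _ _ ih₁ ih₂ => exact .mixBBox _ _ _ _ _ hf hh ih₁ ih₂
  | mixImp _ _ _ _ _ _ hf hh _ _ ih₁ ih₂ => exact .mixImp _ _ _ _ _ _ hf hh ih₁ ih₂
  | cutStar _ _ _ _ _ hf hs _ _ ih₁ ih₂ => exact .cutStar _ _ _ _ _ hf hs ih₁ ih₂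

inductive FS.SplitAnd (a b : Fml) : FS → FS → Prop
  | fml (γ : Fml) : FS.SplitAnd a b (.fml γ) (.fml γ)
  | split : FS.SplitAnd a b (.fml (a.and b)) (.comma (.fml a) (.fml b))
  | comma {Δ₁ Δ₂ Δ₁' Δ₂' : FS} : FS.SplitAnd a b Δ₁ Δ₁' → FS.SplitAnd a b Δ₂ Δ₂' →
      FS.SplitAnd a b (.comma Δ₁ Δ₂) (.comma Δ₁' Δ₂')
  | circ {Δ Δ' : FS} : FS.SplitAnd a b Δ Δ' → FS.SplitAnd a b (.circ Δ) (.circ Δ')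
  | bullet {Δ Δ' : FS} : FS.SplitAnd a b Δ Δ' → FS.SplitAnd a b (.bullet Δ) (.bullet Δ')

inductive Ctx.SplitAnd (a b : Fml) : Ctx → Ctx → Prop
  | hole : Ctx.SplitAnd a b .hole .hole
  | commaL {C C' : Ctx} {Δ Δ' : FS} : Ctx.SplitAnd a b C C' → FS.SplitAnd a b Δ Δ' →
      Ctx.SplitAnd a b (.commaL C Δ) (.commaL C' Δ')
  | commaR {C C' : Ctx} {Δ Δ' : FS} : FS.SplitAnd a b Δ Δ' → Ctx.SplitAnd a b C C' →
      Ctx.SplitAnd a b (.commaR Δ C) (.commaR Δ' C')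
  | circ {C C' : Ctx} : Ctx.SplitAnd a b C C' → Ctx.SplitAnd a b (.circ C) (.circ C')
  | bullet {C C' : Ctx} : Ctx.SplitAnd a b C C' → Ctx.SplitAnd a b (.bullet C) (.bullet C')

namespace FS.SplitAnd

variable {a b : Fml}

theorem refl : ∀ Δ : FS, FS.SplitAnd a b Δ Δ
  | .fml γ => .fml γ
  | .comma Δ₁ Δ₂ => .comma (refl Δ₁) (refl Δ₂)
  | .circ Δ => .circ (refl Δ)
  | .bullet Δ => .bullet (refl Δ)

theorem exists_of_plug : ∀ {C : Ctx} {Δ E : FS}, FS.SplitAnd a b (C.plug Δ) E →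
    ∃ C' Δ', E = C'.plug Δ' ∧ Ctx.SplitAnd a b C C' ∧ FS.SplitAnd a b Δ Δ'
  | .hole, _, E, h => ⟨.hole, E, rfl, .hole, h⟩
  | .commaL _ _, _, _, .comma h₁ h₂ =>
    let ⟨C', Δ', hE, hC, hΔ⟩ := exists_of_plug h₁
    ⟨.commaL C' _, Δ', hE ▸ rfl, .commaL hC h₂, hΔ⟩
  | .commaR _ _, _, _, .comma h₁ h₂ =>
    let ⟨C', Δ', hE, hC, hΔ⟩ := exists_of_plug h₂
    ⟨.commaR _ C', Δ', hE ▸ rfl, .commaR h₁ hC, hΔ⟩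
  | .circ _, _, _, .circ h =>
    let ⟨C', Δ', hE, hC, hΔ⟩ := exists_of_plug h
    ⟨.circ C', Δ', hE ▸ rfl, .circ hC, hΔ⟩
  | .bullet _, _, _, .bullet h =>
    let ⟨C', Δ', hE, hC, hΔ⟩ := exists_of_plug h
    ⟨.bullet C', Δ', hE ▸ rfl, .bullet hC, hΔ⟩

end FS.SplitAnd

namespace Ctx.SplitAnd

variable {a b : Fml}

theorem refl : ∀ C : Ctx, Ctx.SplitAnd a b C C
  | .hole => .hole
  | .commaL C Δ => .commaL (refl C) (.refl Δ)
  | .commaR Δ C => .commaR (.refl Δ) (refl C)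
  | .circ C => .circ (refl C)
  | .bullet C => .bullet (refl C)

theorem plug {C C' : Ctx} {Δ Δ' : FS} (hC : Ctx.SplitAnd a b C C')
    (hΔ : FS.SplitAnd a b Δ Δ') : FS.SplitAnd a b (C.plug Δ) (C'.plug Δ') := by
  induction hC with
  | hole => exact hΔ
  | commaL _ h ih => exact .comma ih h
  | commaR h _ ih => exact .comma h ih
  | circ _ ih => exact .circ ih
  | bullet _ ih => exact .bullet ih

end Ctx.SplitAnd

theorem DerH.splitAnd {R : Rules} (hId : R.idFull = false) (hCon : R.conF = false)
    (hMix : R.mix = false) {a b : Fml} {n : ℕ} {Γ E : FS} {β : Fml} (h : DerH R n Γ β)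
    (hE : FS.SplitAnd a b Γ E) : DerH R n E β := by
  induction h generalizing E with
  | idA _ _ h₁ ha =>
    cases hE with
    | fml => exact .idA _ _ h₁ ha
    | split => nomatch ha
  | idF _ _ hf => simp [hId] at hf
  | topL _ _ _ _ _ ih =>
    obtain ⟨C', Δ', rfl, hC, -⟩ := hE.exists_of_plug
    exact .topL _ _ _ _ (ih (hC.plug (.refl _)))
  | botL _ _ _ _ _ ih =>
    obtain ⟨C', Δ', rfl, -, hΔ⟩ := hE.exists_of_plug
    exact .botL _ _ _ _ (ih hΔ)
  | andL _ _ _ _ _ _ ih =>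
    obtain ⟨C', Δ', rfl, hC, hΔ⟩ := hE.exists_of_plug
    cases hΔ with
    | fml => exact .andL _ _ _ _ _ (ih (hC.plug (.refl _)))
    | split => exact (ih (hC.plug (.refl _))).succ
  | andR _ _ _ _ _ _ ih₁ ih₂ => exact .andR _ _ _ _ (ih₁ hE) (ih₂ hE)
  | orL _ _ _ _ _ _ _ ih₁ ih₂ =>
    obtain ⟨C', Δ', rfl, hC, hΔ⟩ := hE.exists_of_plug
    cases hΔ
    exact .orL _ _ _ _ _ (ih₁ (hC.plug (.refl _))) (ih₂ (hC.plug (.refl _)))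
  | orR₁ _ _ _ _ _ ih => exact .orR₁ _ _ _ _ (ih hE)
  | orR₂ _ _ _ _ _ ih => exact .orR₂ _ _ _ _ (ih hE)
  | impL _ _ _ _ _ _ _ _ ih₁ ih₂ =>
    obtain ⟨C', Δ', rfl, hC, hΔ⟩ := hE.exists_of_plug
    cases hΔ with
    | comma hΔ hγ =>
      cases hγ
      exact .impL _ _ _ _ _ _ (ih₁ hΔ) (ih₂ (hC.plug (.refl _)))
  | impR _ _ _ _ _ ih => exact .impR _ _ _ _ (ih (.comma (.fml _) hE))
  | diaL _ _ _ _ _ ih =>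
    obtain ⟨C', Δ', rfl, hC, hΔ⟩ := hE.exists_of_plug
    cases hΔ
    exact .diaL _ _ _ _ (ih (hC.plug (.refl _)))
  | diaR _ _ _ _ ih =>
    cases hE with
    | circ hΓ => exact .diaR _ _ _ (ih hΓ)
  | bdiaL _ _ _ _ _ ih =>
    obtain ⟨C', Δ', rfl, hC, hΔ⟩ := hE.exists_of_plug
    cases hΔ
    exact .bdiaL _ _ _ _ (ih (hC.plug (.refl _)))
  | bdiaR _ _ _ _ ih =>
    cases hE with
    | bullet hΓ => exact .bdiaR _ _ _ (ih hΓ)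
  | bboxL _ _ _ _ _ ih =>
    obtain ⟨C', Δ', rfl, hC, hΔ⟩ := hE.exists_of_plug
    cases hΔ with
    | circ hγ =>
      cases hγ
      exact .bboxL _ _ _ _ (ih (hC.plug (.refl _)))
  | bboxR _ _ _ _ ih => exact .bboxR _ _ _ (ih (.circ hE))
  | boxL _ _ _ _ _ ih =>
    obtain ⟨C', Δ', rfl, hC, hΔ⟩ := hE.exists_of_plug
    cases hΔ with
    | bullet hγ =>
      cases hγ
      exact .boxL _ _ _ _ (ih (hC.plug (.refl _)))
  | boxR _ _ _ _ ih => exact .boxR _ _ _ (ih (.bullet hE))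
  | conCirc _ _ _ _ _ _ ih =>
    obtain ⟨C', Δ', rfl, hC, hΔ⟩ := hE.exists_of_plug
    cases hΔ with
    | circ hΔ =>
      cases hΔ with
      | comma h₁ h₂ => exact .conCirc _ _ _ _ _ (ih (hC.plug (.comma (.circ h₁) (.circ h₂))))
  | conBullet _ _ _ _ _ _ ih =>
    obtain ⟨C', Δ', rfl, hC, hΔ⟩ := hE.exists_of_plug
    cases hΔ with
    | bullet hΔ =>
      cases hΔ with
      | comma h₁ h₂ =>
        exact .conBullet _ _ _ _ _ (ih (hC.plug (.comma (.bullet h₁) (.bullet h₂))))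
  | conF _ _ _ _ hf => simp [hCon] at hf
  | conA _ _ _ _ hf ha _ ih =>
    obtain ⟨C', Δ', rfl, hC, hΔ⟩ := hE.exists_of_plug
    cases hΔ with
    | fml => exact .conA _ _ _ _ hf ha (ih (hC.plug (.refl _)))
    | split => nomatch ha
  | conBox _ _ _ _ hf _ ih =>
    obtain ⟨C', Δ', rfl, hC, hΔ⟩ := hE.exists_of_plug
    cases hΔ
    exact .conBox _ _ _ _ hf (ih (hC.plug (.refl _)))
  | conBBox _ _ _ _ hf _ ih =>
    obtain ⟨C', Δ', rfl, hC, hΔ⟩ := hE.exists_of_plug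
    cases hΔ
    exact .conBBox _ _ _ _ hf (ih (hC.plug (.refl _)))
  | conImp _ _ _ _ _ hf _ ih =>
    obtain ⟨C', Δ', rfl, hC, hΔ⟩ := hE.exists_of_plug
    cases hΔ
    exact .conImp _ _ _ _ _ hf (ih (hC.plug (.refl _)))
  | wk₁ _ _ _ _ _ _ ih =>
    obtain ⟨C', Δ', rfl, hC, hΔ⟩ := hE.exists_of_plug
    cases hΔ with
    | comma h₁ _ => exact .wk₁ _ _ _ _ _ (ih (hC.plug h₁))
  | wk₂ _ _ _ _ _ _ ih =>
    obtain ⟨C', Δ', rfl, hC, hΔ⟩ := hE.exists_of_plug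
    cases hΔ with
    | comma _ h₂ => exact .wk₂ _ _ _ _ _ (ih (hC.plug h₂))
  | ex _ _ _ _ _ _ ih =>
    obtain ⟨C', Δ', rfl, hC, hΔ⟩ := hE.exists_of_plug
    cases hΔ with
    | comma h₁ h₂ => exact .ex _ _ _ _ _ (ih (hC.plug (.comma h₂ h₁)))
  | dualCB _ _ _ _ _ _ ih =>
    obtain ⟨C', Δ', rfl, -, hΔ⟩ := hE.exists_of_plug
    cases hΔ with
    | comma h₁ h₂ =>
      cases h₂ with
      | bullet h₂ => exact .dualCB _ _ _ _ _ (ih (.comma (.circ h₁) h₂))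
  | dualBC _ _ _ _ _ _ ih =>
    obtain ⟨C', Δ', rfl, -, hΔ⟩ := hE.exists_of_plug
    cases hΔ with
    | comma h₁ h₂ =>
      cases h₂ with
      | circ h₂ => exact .dualBC _ _ _ _ _ (ih (.comma (.bullet h₁) h₂))
  | cut _ _ _ _ _ hf _ _ ih₁ ih₂ =>
    obtain ⟨C', Δ', rfl, hC, hΔ⟩ := hE.exists_of_plug
    exact .cut _ _ _ _ _ hf (ih₁ hΔ) (ih₂ (hC.plug (.refl _)))
  | mixA _ _ _ _ _ hf | mixBox _ _ _ _ _ hf | mixBBox _ _ _ _ _ hf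
  | mixImp _ _ _ _ _ _ hf | cutStar _ _ _ _ _ hf => simp [hMix] at hf

/-- height-preserving invertibility of (∧L) in cut-free GwIKt†. -/
theorem stmt1_andL_invertible :
    ∀ n : ℕ, 1 ≤ n → ∀ (Γ : Ctx) (α₁ α₂ β : Fml),
      DerH GwIKtDCF n (Γ.plug (.fml (α₁.and α₂))) β →
      DerH GwIKtDCF n (Γ.plug (.comma (.fml α₁) (.fml α₂))) β :=
  fun _ _ Γ _ _ _ h => h.splitAnd rfl rfl rfl ((Ctx.SplitAnd.refl Γ).plug .split)
end

section
/- In the cut-free calculus GwIKt†, the left disjunction rule is height-preserving invertible: for all n ≥ 1, if Γ[α₁∨α₂] ⇒ β is derivable with height n, then both Γ[α₁] ⇒ β and Γ[α₂] ⇒ β are derivable with height at most n. -/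
/-!
(∨L) is inverted by replacing occurrences of `α₁ ∨ α₂` by a disjunct `αᵢ` throughout a
derivation. By induction on the derivation, a replacement in the conclusion of a rule is pushed
into its premises and the rule is reapplied at the same height; the one exception is a (∨L) step
whose principal occurrence is replaced, and there the `i`-th premise already derives the replaced
sequent, one step lower. Replacing an arbitrary set of occurrences, not a single one, keeps the
induction hypothesis strong enough for contraction, whose premise contains two copies of the
contracted formula.
-/

inductive FS.Replace (φ ψ : Fml) : FS → FS → Prop
  | keep (χ : Fml) : FS.Replace φ ψ (.fml χ) (.fml χ)
  | replace : FS.Replace φ ψ (.fml φ) (.fml ψ)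
  | comma {A B A' B' : FS} : FS.Replace φ ψ A A' → FS.Replace φ ψ B B' →
      FS.Replace φ ψ (.comma A B) (.comma A' B')
  | circ {A A' : FS} : FS.Replace φ ψ A A' → FS.Replace φ ψ (.circ A) (.circ A')
  | bullet {A A' : FS} : FS.Replace φ ψ A A' → FS.Replace φ ψ (.bullet A) (.bullet A')

namespace FS.Replace

variable {φ ψ : Fml}

theorem refl : ∀ Δ : FS, FS.Replace φ ψ Δ Δ
  | .fml χ => keep χ
  | .comma A B => comma (refl A) (refl B)
  | .circ A => circ (refl A)
  | .bullet A => bullet (refl A)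

theorem plug_self : ∀ C : Ctx, FS.Replace φ ψ (C.plug (.fml φ)) (C.plug (.fml ψ))
  | .hole => replace
  | .commaL C Γ => comma (plug_self C) (refl Γ)
  | .commaR Γ C => comma (refl Γ) (plug_self C)
  | .circ C => circ (plug_self C)
  | .bullet C => bullet (plug_self C)

theorem plug_inv : ∀ (C : Ctx) {X Z : FS}, FS.Replace φ ψ (C.plug X) Z →
    ∃ (C' : Ctx) (X' : FS), Z = C'.plug X' ∧ FS.Replace φ ψ X X' ∧
      ∀ U V, FS.Replace φ ψ U V → FS.Replace φ ψ (C.plug U) (C'.plug V)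
  | .hole, _, Z, h => ⟨.hole, Z, rfl, h, fun _ _ h => h⟩
  | .commaL C _, _, _, .comma h₁ h₂ => by
      obtain ⟨C', X', rfl, hX, hC⟩ := plug_inv C h₁
      exact ⟨.commaL C' _, X', rfl, hX, fun U V h => comma (hC U V h) h₂⟩
  | .commaR _ C, _, _, .comma h₁ h₂ => by
      obtain ⟨C', X', rfl, hX, hC⟩ := plug_inv C h₂
      exact ⟨.commaR _ C', X', rfl, hX, fun U V h => comma h₁ (hC U V h)⟩
  | .circ C, _, _, .circ h => by
      obtain ⟨C', X', rfl, hX, hC⟩ := plug_inv C h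
      exact ⟨.circ C', X', rfl, hX, fun U V h => circ (hC U V h)⟩
  | .bullet C, _, _, .bullet h => by
      obtain ⟨C', X', rfl, hX, hC⟩ := plug_inv C h
      exact ⟨.bullet C', X', rfl, hX, fun U V h => bullet (hC U V h)⟩

theorem plug_fml_inv (C : Ctx) {χ : Fml} {Z : FS} (hχ : χ ≠ φ)
    (h : FS.Replace φ ψ (C.plug (.fml χ)) Z) :
    ∃ C' : Ctx, Z = C'.plug (.fml χ) ∧
      ∀ U V, FS.Replace φ ψ U V → FS.Replace φ ψ (C.plug U) (C'.plug V) := by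
  obtain ⟨C', X', rfl, hX, hC⟩ := plug_inv C h
  cases hX with
  | keep => exact ⟨C', rfl, hC⟩
  | replace => exact absurd rfl hχ

end FS.Replace

theorem DerH.replace_disjunct {R : Rules} {α₁ α₂ ψ : Fml} (hId : R.idFull = false)
    (hMix : R.mix = false) (hψ : ψ = α₁ ∨ ψ = α₂) {n : ℕ} {Δ Δ' : FS} {β : Fml}
    (h : DerH R n Δ β) (hrep : FS.Replace (α₁.or α₂) ψ Δ Δ') : DerH R n Δ' β := by
  induction h generalizing Δ' with
  | idA _ _ hn hα =>
      cases hrep with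
      | keep => exact .idA _ _ hn hα
      | replace => exact hα.elim
  | idF _ _ hR => nomatch hId ▸ hR
  | topL _ C _ β _ ih =>
      obtain ⟨C', X', rfl, -, hC⟩ := hrep.plug_inv C
      exact .topL _ C' X' β (ih (hC _ _ (.refl _)))
  | botL _ C _ β _ ih =>
      obtain ⟨C', X', rfl, hX, -⟩ := hrep.plug_inv C
      exact .botL _ C' X' β (ih hX)
  | andL _ C a b β _ ih =>
      obtain ⟨C', rfl, hC⟩ := hrep.plug_fml_inv C (by simp)
      exact .andL _ C' a b β (ih (hC _ _ (.refl _)))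
  | andR _ _ b₁ b₂ _ _ ih₁ ih₂ => exact .andR _ Δ' b₁ b₂ (ih₁ hrep) (ih₂ hrep)
  | orL _ C a b β _ _ ih₁ ih₂ =>
      obtain ⟨C', X', rfl, hX, hC⟩ := hrep.plug_inv C
      cases hX with
      | keep => exact .orL _ C' a b β (ih₁ (hC _ _ (.refl _))) (ih₂ (hC _ _ (.refl _)))
      | replace =>
          rcases hψ with rfl | rfl
          · exact (ih₁ (hC _ _ (.refl _))).succ
          · exact (ih₂ (hC _ _ (.refl _))).succ
  | orR₁ _ _ b₁ b₂ _ ih => exact .orR₁ _ Δ' b₁ b₂ (ih hrep)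
  | orR₂ _ _ b₁ b₂ _ ih => exact .orR₂ _ Δ' b₁ b₂ (ih hrep)
  | impL _ C _ a₁ a₂ β _ _ ih₁ ih₂ =>
      obtain ⟨C', X', rfl, hX, hC⟩ := hrep.plug_inv C
      cases hX with
      | comma hD hF =>
          cases hF
          exact .impL _ C' _ a₁ a₂ β (ih₁ hD) (ih₂ (hC _ _ (.refl _)))
  | impR _ _ b₁ b₂ _ ih => exact .impR _ Δ' b₁ b₂ (ih (.comma (.refl _) hrep))
  | diaL _ C a β _ ih =>
      obtain ⟨C', rfl, hC⟩ := hrep.plug_fml_inv C (by simp)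
      exact .diaL _ C' a β (ih (hC _ _ (.refl _)))
  | diaR _ _ β _ ih =>
      cases hrep with
      | circ h => exact .diaR _ _ β (ih h)
  | bdiaL _ C a β _ ih =>
      obtain ⟨C', rfl, hC⟩ := hrep.plug_fml_inv C (by simp)
      exact .bdiaL _ C' a β (ih (hC _ _ (.refl _)))
  | bdiaR _ _ β _ ih =>
      cases hrep with
      | bullet h => exact .bdiaR _ _ β (ih h)
  | bboxL _ C a β _ ih =>
      obtain ⟨C', X', rfl, hX, hC⟩ := hrep.plug_inv C
      cases hX with
      | circ h =>
          cases h
          exact .bboxL _ C' a β (ih (hC _ _ (.refl _)))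
  | bboxR _ _ β _ ih => exact .bboxR _ Δ' β (ih (.circ hrep))
  | boxL _ C a β _ ih =>
      obtain ⟨C', X', rfl, hX, hC⟩ := hrep.plug_inv C
      cases hX with
      | bullet h =>
          cases h
          exact .boxL _ C' a β (ih (hC _ _ (.refl _)))
  | boxR _ _ β _ ih => exact .boxR _ Δ' β (ih (.bullet hrep))
  | conCirc _ C _ _ β _ ih =>
      obtain ⟨C', X', rfl, hX, hC⟩ := hrep.plug_inv C
      cases hX with
      | circ h =>
          cases h with
          | comma h₁ h₂ =>
              exact .conCirc _ C' _ _ β (ih (hC _ _ (.comma (.circ h₁) (.circ h₂))))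
  | conBullet _ C _ _ β _ ih =>
      obtain ⟨C', X', rfl, hX, hC⟩ := hrep.plug_inv C
      cases hX with
      | bullet h =>
          cases h with
          | comma h₁ h₂ =>
              exact .conBullet _ C' _ _ β (ih (hC _ _ (.comma (.bullet h₁) (.bullet h₂))))
  | conF _ C a β hR _ ih =>
      obtain ⟨C', X', rfl, hX, hC⟩ := hrep.plug_inv C
      cases hX with
      | keep => exact .conF _ C' a β hR (ih (hC _ _ (.refl _)))
      | replace => exact .conF _ C' ψ β hR (ih (hC _ _ (.comma .replace .replace)))
  | conA _ C a β hR hα _ ih =>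
      obtain ⟨C', rfl, hC⟩ := hrep.plug_fml_inv C (by rintro rfl; exact hα)
      exact .conA _ C' a β hR hα (ih (hC _ _ (.refl _)))
  | conBox _ C a β hR _ ih =>
      obtain ⟨C', rfl, hC⟩ := hrep.plug_fml_inv C (by simp)
      exact .conBox _ C' a β hR (ih (hC _ _ (.refl _)))
  | conBBox _ C a β hR _ ih =>
      obtain ⟨C', rfl, hC⟩ := hrep.plug_fml_inv C (by simp)
      exact .conBBox _ C' a β hR (ih (hC _ _ (.refl _)))
  | conImp _ C a₁ a₂ β hR _ ih =>
      obtain ⟨C', rfl, hC⟩ := hrep.plug_fml_inv C (by simp)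
      exact .conImp _ C' a₁ a₂ β hR (ih (hC _ _ (.refl _)))
  | wk₁ _ C _ _ β _ ih =>
      obtain ⟨C', X', rfl, hX, hC⟩ := hrep.plug_inv C
      cases hX with
      | comma h₁ _ => exact .wk₁ _ C' _ _ β (ih (hC _ _ h₁))
  | wk₂ _ C _ _ β _ ih =>
      obtain ⟨C', X', rfl, hX, hC⟩ := hrep.plug_inv C
      cases hX with
      | comma _ h₂ => exact .wk₂ _ C' _ _ β (ih (hC _ _ h₂))
  | ex _ C _ _ β _ ih =>
      obtain ⟨C', X', rfl, hX, hC⟩ := hrep.plug_inv C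
      cases hX with
      | comma h₂ h₁ => exact .ex _ C' _ _ β (ih (hC _ _ (.comma h₁ h₂)))
  | dualCB _ C _ _ β _ ih =>
      obtain ⟨C', X', rfl, hX, -⟩ := hrep.plug_inv C
      cases hX with
      | comma h₁ h₂ =>
          cases h₂ with
          | bullet h₂ => exact .dualCB _ C' _ _ β (ih (.comma (.circ h₁) h₂))
  | dualBC _ C _ _ β _ ih =>
      obtain ⟨C', X', rfl, hX, -⟩ := hrep.plug_inv C
      cases hX with
      | comma h₁ h₂ =>
          cases h₂ with
          | circ h₂ => exact .dualBC _ C' _ _ β (ih (.comma (.bullet h₁) h₂))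
  | cut _ C _ a β hR _ _ ih₁ ih₂ =>
      obtain ⟨C', X', rfl, hX, hC⟩ := hrep.plug_inv C
      exact .cut _ C' X' a β hR (ih₁ hX) (ih₂ (hC _ _ (.refl _)))
  | mixA _ _ _ _ _ hR => nomatch hMix ▸ hR
  | mixBox _ _ _ _ _ hR => nomatch hMix ▸ hR
  | mixBBox _ _ _ _ _ hR => nomatch hMix ▸ hR
  | mixImp _ _ _ _ _ _ hR => nomatch hMix ▸ hR
  | cutStar _ _ _ _ _ hR => nomatch hMix ▸ hR

/-- height-preserving invertibility of (∨L) in cut-free GwIKt†. -/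
theorem stmt2_orL_invertible :
    ∀ n : ℕ, 1 ≤ n → ∀ (Γ : Ctx) (α₁ α₂ β : Fml),
      DerH GwIKtDCF n (Γ.plug (.fml (α₁.or α₂))) β →
      DerH GwIKtDCF n (Γ.plug (.fml α₁)) β ∧ DerH GwIKtDCF n (Γ.plug (.fml α₂)) β := by
  intro n _ Γ α₁ α₂ β h
  exact ⟨h.replace_disjunct rfl rfl (.inl rfl) (.plug_self Γ),
    h.replace_disjunct rfl rfl (.inr rfl) (.plug_self Γ)⟩
end

section
/- In the cut-free calculus GwIKt†, the left black-diamond rule is height-preserving invertible: for all n ≥ 1, if Γ[◆α] ⇒ β is derivable with height n, then Γ[•α] ⇒ β is derivable with height at most n. -/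
inductive ReplBdia (α : Fml) : FS → FS → Prop
  | fml (γ : Fml) : ReplBdia α (.fml γ) (.fml γ)
  | bdia : ReplBdia α (.fml α.bdia) (.bullet (.fml α))
  | comma {Δ₁ Δ₂ Δ₁' Δ₂' : FS} :
      ReplBdia α Δ₁ Δ₁' → ReplBdia α Δ₂ Δ₂' → ReplBdia α (.comma Δ₁ Δ₂) (.comma Δ₁' Δ₂')
  | circ {Δ Δ' : FS} : ReplBdia α Δ Δ' → ReplBdia α (.circ Δ) (.circ Δ')
  | bullet {Δ Δ' : FS} : ReplBdia α Δ Δ' → ReplBdia α (.bullet Δ) (.bullet Δ')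

def CtxReplBdia (α : Fml) (C C' : Ctx) : Prop :=
  ∀ ⦃Ξ Ξ' : FS⦄, ReplBdia α Ξ Ξ' → ReplBdia α (C.plug Ξ) (C'.plug Ξ')

namespace ReplBdia

variable {α : Fml}

protected theorem refl : ∀ Δ : FS, ReplBdia α Δ Δ
  | .fml γ => .fml γ
  | .comma Δ₁ Δ₂ => .comma (.refl Δ₁) (.refl Δ₂)
  | .circ Δ => .circ (.refl Δ)
  | .bullet Δ => .bullet (.refl Δ)

theorem plug {Ξ Ξ' : FS} (h : ReplBdia α Ξ Ξ') : ∀ C : Ctx, ReplBdia α (C.plug Ξ) (C.plug Ξ')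
  | .hole => h
  | .commaL C Γ => .comma (h.plug C) (.refl Γ)
  | .commaR Γ C => .comma (.refl Γ) (h.plug C)
  | .circ C => .circ (h.plug C)
  | .bullet C => .bullet (h.plug C)

theorem of_plug {C : Ctx} {Δ T : FS} (h : ReplBdia α (C.plug Δ) T) :
    ∃ C' Δ', T = C'.plug Δ' ∧ ReplBdia α Δ Δ' ∧ CtxReplBdia α C C' := by
  induction C generalizing T with
  | hole => exact ⟨.hole, T, rfl, h, fun _ _ h => h⟩
  | commaL C Γ ih =>
    cases h with
    | comma h₁ h₂ =>
      obtain ⟨C', Δ', rfl, hΔ, hC⟩ := ih h₁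
      exact ⟨.commaL C' _, Δ', rfl, hΔ, fun _ _ h => .comma (hC h) h₂⟩
  | commaR Γ C ih =>
    cases h with
    | comma h₁ h₂ =>
      obtain ⟨C', Δ', rfl, hΔ, hC⟩ := ih h₂
      exact ⟨.commaR _ C', Δ', rfl, hΔ, fun _ _ h => .comma h₁ (hC h)⟩
  | circ C ih =>
    cases h with
    | circ h =>
      obtain ⟨C', Δ', rfl, hΔ, hC⟩ := ih h
      exact ⟨.circ C', Δ', rfl, hΔ, fun _ _ h => .circ (hC h)⟩
  | bullet C ih =>
    cases h with
    | bullet h =>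
      obtain ⟨C', Δ', rfl, hΔ, hC⟩ := ih h
      exact ⟨.bullet C', Δ', rfl, hΔ, fun _ _ h => .bullet (hC h)⟩

end ReplBdia

theorem DerH.replBdia {R : Rules} (hId : R.idFull = false) (hCon : R.conF = false)
    (hMix : R.mix = false) {α : Fml} {n : ℕ} {S S' : FS} {β : Fml} (h : DerH R n S β)
    (hr : ReplBdia α S S') : DerH R n S' β := by
  induction h generalizing S' with
  | idA n γ h₁ hA =>
    cases hr
    exacts [.idA n γ h₁ hA, hA.elim]
  | idF _ _ hR => simp [hId] at hR
  | topL n Γ Δ β _ ih =>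
    obtain ⟨C', Δ', rfl, -, hC⟩ := hr.of_plug
    exact .topL n C' Δ' β (ih (hC (.fml _)))
  | botL n Γ Δ β _ ih =>
    obtain ⟨C', Δ', rfl, hΔ, -⟩ := hr.of_plug
    exact .botL n C' Δ' β (ih hΔ)
  | andL n Γ α₁ α₂ β _ ih =>
    obtain ⟨C', _, rfl, ⟨⟩, hC⟩ := hr.of_plug
    exact .andL n C' α₁ α₂ β (ih (hC (.refl _)))
  | andR n Γ β₁ β₂ _ _ ih₁ ih₂ => exact .andR n _ β₁ β₂ (ih₁ hr) (ih₂ hr)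
  | orL n Γ α₁ α₂ β _ _ ih₁ ih₂ =>
    obtain ⟨C', _, rfl, ⟨⟩, hC⟩ := hr.of_plug
    exact .orL n C' α₁ α₂ β (ih₁ (hC (.fml _))) (ih₂ (hC (.fml _)))
  | orR₁ n Γ β₁ β₂ _ ih => exact .orR₁ n _ β₁ β₂ (ih hr)
  | orR₂ n Γ β₁ β₂ _ ih => exact .orR₂ n _ β₁ β₂ (ih hr)
  | impL n Γ Δ α₁ α₂ β _ _ ih₁ ih₂ =>
    obtain ⟨C', _, rfl, hΔ, hC⟩ := hr.of_plug
    cases hΔ with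
    | comma hΔ hImp =>
      cases hImp
      exact .impL n C' _ α₁ α₂ β (ih₁ hΔ) (ih₂ (hC (.fml _)))
  | impR n Γ β₁ β₂ _ ih => exact .impR n _ β₁ β₂ (ih (.comma (.fml _) hr))
  | diaL n Γ γ β _ ih =>
    obtain ⟨C', _, rfl, ⟨⟩, hC⟩ := hr.of_plug
    exact .diaL n C' γ β (ih (hC (.refl _)))
  | diaR n Γ β _ ih =>
    cases hr with
    | circ hr => exact .diaR n _ β (ih hr)
  | bdiaL n Γ γ β _ ih =>
    obtain ⟨C', _, rfl, _ | _, hC⟩ := hr.of_plug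
    · exact .bdiaL n C' γ β (ih (hC (.refl _)))
    · exact (ih (hC (.refl _))).succ
  | bdiaR n Γ β _ ih =>
    cases hr with
    | bullet hr => exact .bdiaR n _ β (ih hr)
  | bboxL n Γ γ β _ ih =>
    obtain ⟨C', _, rfl, hΔ, hC⟩ := hr.of_plug
    cases hΔ with
    | circ hΔ =>
      cases hΔ
      exact .bboxL n C' γ β (ih (hC (.fml _)))
  | bboxR n Γ β _ ih => exact .bboxR n _ β (ih (.circ hr))
  | boxL n Γ γ β _ ih =>
    obtain ⟨C', _, rfl, hΔ, hC⟩ := hr.of_plug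
    cases hΔ with
    | bullet hΔ =>
      cases hΔ
      exact .boxL n C' γ β (ih (hC (.fml _)))
  | boxR n Γ β _ ih => exact .boxR n _ β (ih (.bullet hr))
  | conCirc n Γ Δ₁ Δ₂ β _ ih =>
    obtain ⟨C', _, rfl, hΔ, hC⟩ := hr.of_plug
    cases hΔ with
    | circ hΔ =>
      cases hΔ with
      | comma h₁ h₂ => exact .conCirc n C' _ _ β (ih (hC (.comma (.circ h₁) (.circ h₂))))
  | conBullet n Γ Δ₁ Δ₂ β _ ih =>
    obtain ⟨C', _, rfl, hΔ, hC⟩ := hr.of_plug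
    cases hΔ with
    | bullet hΔ =>
      cases hΔ with
      | comma h₁ h₂ => exact .conBullet n C' _ _ β (ih (hC (.comma (.bullet h₁) (.bullet h₂))))
  | conF _ _ _ _ hR => simp [hCon] at hR
  | conA n Γ γ β hR hA _ ih =>
    obtain ⟨C', _, rfl, _ | _, hC⟩ := hr.of_plug
    · exact .conA n C' γ β hR hA (ih (hC (.refl _)))
    · exact hA.elim
  | conBox n Γ γ β hR _ ih =>
    obtain ⟨C', _, rfl, ⟨⟩, hC⟩ := hr.of_plug
    exact .conBox n C' γ β hR (ih (hC (.refl _)))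
  | conBBox n Γ γ β hR _ ih =>
    obtain ⟨C', _, rfl, ⟨⟩, hC⟩ := hr.of_plug
    exact .conBBox n C' γ β hR (ih (hC (.refl _)))
  | conImp n Γ α₁ α₂ β hR _ ih =>
    obtain ⟨C', _, rfl, ⟨⟩, hC⟩ := hr.of_plug
    exact .conImp n C' α₁ α₂ β hR (ih (hC (.refl _)))
  | wk₁ n Γ Δ₁ Δ₂ β _ ih =>
    obtain ⟨C', _, rfl, hΔ, hC⟩ := hr.of_plug
    cases hΔ with
    | comma h₁ _ => exact .wk₁ n C' _ _ β (ih (hC h₁))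
  | wk₂ n Γ Δ₁ Δ₂ β _ ih =>
    obtain ⟨C', _, rfl, hΔ, hC⟩ := hr.of_plug
    cases hΔ with
    | comma _ h₂ => exact .wk₂ n C' _ _ β (ih (hC h₂))
  | ex n Γ Δ₁ Δ₂ β _ ih =>
    obtain ⟨C', _, rfl, hΔ, hC⟩ := hr.of_plug
    cases hΔ with
    | comma h₁ h₂ => exact .ex n C' _ _ β (ih (hC (.comma h₂ h₁)))
  | dualCB n Γ Δ₁ Δ₂ β _ ih =>
    obtain ⟨C', _, rfl, hΔ, -⟩ := hr.of_plug
    cases hΔ with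
    | comma h₁ h₂ =>
      cases h₂ with
      | bullet h₂ => exact .dualCB n C' _ _ β (ih (.comma (.circ h₁) h₂))
  | dualBC n Γ Δ₁ Δ₂ β _ ih =>
    obtain ⟨C', _, rfl, hΔ, -⟩ := hr.of_plug
    cases hΔ with
    | comma h₁ h₂ =>
      cases h₂ with
      | circ h₂ => exact .dualBC n C' _ _ β (ih (.comma (.bullet h₁) h₂))
  | cut n Γ Δ γ β hR _ _ ih₁ ih₂ =>
    obtain ⟨C', Δ', rfl, hΔ, hC⟩ := hr.of_plug
    exact .cut n C' Δ' γ β hR (ih₁ hΔ) (ih₂ (hC (.fml _)))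
  | mixA _ _ _ _ _ hR | mixBox _ _ _ _ _ hR | mixBBox _ _ _ _ _ hR | mixImp _ _ _ _ _ _ hR
  | cutStar _ _ _ _ _ hR => simp [hMix] at hR

/-- height-preserving invertibility of (◆L) in cut-free GwIKt†. -/
theorem stmt4_bdiaL_invertible :
    ∀ n : ℕ, 1 ≤ n → ∀ (Γ : Ctx) (α β : Fml),
      DerH GwIKtDCF n (Γ.plug (.fml α.bdia)) β →
      DerH GwIKtDCF n (Γ.plug (.bullet (.fml α))) β :=
  fun _ _ Γ _ _ h => h.replBdia rfl rfl rfl (ReplBdia.bdia.plug Γ)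
end

section
/- In the cut-free calculus GwIKt†, the right implication rule is height-preserving invertible: for all n ≥ 1, if Γ ⇒ β₁ → β₂ is derivable with height n, then β₁, Γ ⇒ β₂ is derivable with height at most n. -/
theorem DerH.inv_impR {R : Rules} (hR : R.idFull = false) {n : ℕ} {Γ : FS} {β₁ β₂ : Fml}
    (h : DerH R n Γ (β₁.imp β₂)) : DerH R n (.comma (.fml β₁) Γ) β₂ := by
  generalize hγ : β₁.imp β₂ = γ at h
  induction h with
  | impR n Γ _ _ h => cases hγ; exact h.succ
  | idA _ _ _ hα => subst hγ; exact hα.elim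
  | idF _ _ hR' => simp [hR] at hR'
  | andR | orR₁ | orR₂ | diaR | bdiaR | bboxR | boxR => cases hγ
  | topL n Γ Δ _ _ ih => subst hγ; exact .topL n (.commaR _ Γ) Δ _ (ih rfl)
  | botL n Γ Δ _ h => subst hγ; exact .botL n (.commaR _ Γ) Δ _ h
  | andL n Γ α₁ α₂ _ _ ih => subst hγ; exact .andL n (.commaR _ Γ) α₁ α₂ _ (ih rfl)
  | orL n Γ α₁ α₂ _ _ _ ih₁ ih₂ =>
    subst hγ; exact .orL n (.commaR _ Γ) α₁ α₂ _ (ih₁ rfl) (ih₂ rfl)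
  | impL n Γ Δ α₁ α₂ _ h _ _ ih => subst hγ; exact .impL n (.commaR _ Γ) Δ α₁ α₂ _ h (ih rfl)
  | diaL n Γ α _ _ ih => subst hγ; exact .diaL n (.commaR _ Γ) α _ (ih rfl)
  | bdiaL n Γ α _ _ ih => subst hγ; exact .bdiaL n (.commaR _ Γ) α _ (ih rfl)
  | bboxL n Γ α _ _ ih => subst hγ; exact .bboxL n (.commaR _ Γ) α _ (ih rfl)
  | boxL n Γ α _ _ ih => subst hγ; exact .boxL n (.commaR _ Γ) α _ (ih rfl)
  | conCirc n Γ Δ₁ Δ₂ _ _ ih => subst hγ; exact .conCirc n (.commaR _ Γ) Δ₁ Δ₂ _ (ih rfl)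
  | conBullet n Γ Δ₁ Δ₂ _ _ ih => subst hγ; exact .conBullet n (.commaR _ Γ) Δ₁ Δ₂ _ (ih rfl)
  | conF n Γ α _ hc _ ih => subst hγ; exact .conF n (.commaR _ Γ) α _ hc (ih rfl)
  | conA n Γ α _ hc hα _ ih => subst hγ; exact .conA n (.commaR _ Γ) α _ hc hα (ih rfl)
  | conBox n Γ α _ hc _ ih => subst hγ; exact .conBox n (.commaR _ Γ) α _ hc (ih rfl)
  | conBBox n Γ α _ hc _ ih => subst hγ; exact .conBBox n (.commaR _ Γ) α _ hc (ih rfl)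
  | conImp n Γ α₁ α₂ _ hc _ ih => subst hγ; exact .conImp n (.commaR _ Γ) α₁ α₂ _ hc (ih rfl)
  | wk₁ n Γ Δ₁ Δ₂ _ _ ih => subst hγ; exact .wk₁ n (.commaR _ Γ) Δ₁ Δ₂ _ (ih rfl)
  | wk₂ n Γ Δ₁ Δ₂ _ _ ih => subst hγ; exact .wk₂ n (.commaR _ Γ) Δ₁ Δ₂ _ (ih rfl)
  | ex n Γ Δ₁ Δ₂ _ _ ih => subst hγ; exact .ex n (.commaR _ Γ) Δ₁ Δ₂ _ (ih rfl)
  | dualCB n Γ Δ₁ Δ₂ _ h => subst hγ; exact .dualCB n (.commaR _ Γ) Δ₁ Δ₂ _ h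
  | dualBC n Γ Δ₁ Δ₂ _ h => subst hγ; exact .dualBC n (.commaR _ Γ) Δ₁ Δ₂ _ h
  | cut n Γ Δ α _ hc h _ _ ih => subst hγ; exact .cut n (.commaR _ Γ) Δ α _ hc h (ih rfl)
  | cutStar n Γ Δ α _ hc hα h _ _ ih =>
    subst hγ; exact .cutStar n (.commaR _ Γ) Δ α _ hc hα h (ih rfl)
  | mixA n Γ Δ α _ hc hα hΓ h _ _ ih =>
    subst hγ; exact .mixA n (.comma (.fml _) Γ) Δ α _ hc hα (by simpa [MCtx.holes]) h (ih rfl)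
  | mixBox n Γ Δ α _ hc hΓ h _ _ ih =>
    subst hγ; exact .mixBox n (.comma (.fml _) Γ) Δ α _ hc (by simpa [MCtx.holes]) h (ih rfl)
  | mixBBox n Γ Δ α _ hc hΓ h _ _ ih =>
    subst hγ; exact .mixBBox n (.comma (.fml _) Γ) Δ α _ hc (by simpa [MCtx.holes]) h (ih rfl)
  | mixImp n Γ Δ α₁ α₂ _ hc hΓ h _ _ ih =>
    subst hγ; exact .mixImp n (.comma (.fml _) Γ) Δ α₁ α₂ _ hc (by simpa [MCtx.holes]) h (ih rfl)

/-- height-preserving invertibility of (→R) in cut-free GwIKt†. -/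
theorem stmt8_impR_invertible :
    ∀ n : ℕ, 1 ≤ n → ∀ (Γ : FS) (β₁ β₂ : Fml),
      DerH GwIKtDCF n Γ (β₁.imp β₂) →
      DerH GwIKtDCF n (.comma (.fml β₁) Γ) β₂ :=
  fun _ _ _ _ _ h ↦ DerH.inv_impR rfl h
end

section
/- In the cut-free calculus GwIKt†, the right box rule is height-preserving invertible: for all n ≥ 1, if Γ ⇒ □β is derivable with height n, then •Γ ⇒ β is derivable with height at most n. -/
theorem DerH.inv_boxR {R : Rules} (hR : R.idFull = false) {n : ℕ} {Γ : FS} {β : Fml}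
    (h : DerH R n Γ β.box) : DerH R n (.bullet Γ) β := by
  generalize hγ : β.box = γ at h
  induction h generalizing β with
  | idA _ _ _ hα => subst hγ; exact hα.elim
  | idF _ _ hF => simp [hR] at hF
  | boxR _ _ _ hp => cases hγ; exact hp.succ
  | andR | orR₁ | orR₂ | impR | diaR | bdiaR | bboxR => cases hγ
  | topL n Γ Δ _ _ ih => subst hγ; exact .topL n (.bullet Γ) Δ β (ih rfl)
  | botL n Γ Δ _ hp => subst hγ; exact .botL n (.bullet Γ) Δ β hp
  | andL n Γ α₁ α₂ _ _ ih => subst hγ; exact .andL n (.bullet Γ) α₁ α₂ β (ih rfl)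
  | orL n Γ α₁ α₂ _ _ _ ih₁ ih₂ =>
    subst hγ; exact .orL n (.bullet Γ) α₁ α₂ β (ih₁ rfl) (ih₂ rfl)
  | impL n Γ Δ α₁ α₂ _ hp _ _ ih => subst hγ; exact .impL n (.bullet Γ) Δ α₁ α₂ β hp (ih rfl)
  | diaL n Γ α _ _ ih => subst hγ; exact .diaL n (.bullet Γ) α β (ih rfl)
  | bdiaL n Γ α _ _ ih => subst hγ; exact .bdiaL n (.bullet Γ) α β (ih rfl)
  | bboxL n Γ α _ _ ih => subst hγ; exact .bboxL n (.bullet Γ) α β (ih rfl)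
  | boxL n Γ α _ _ ih => subst hγ; exact .boxL n (.bullet Γ) α β (ih rfl)
  | conCirc n Γ Δ₁ Δ₂ _ _ ih => subst hγ; exact .conCirc n (.bullet Γ) Δ₁ Δ₂ β (ih rfl)
  | conBullet n Γ Δ₁ Δ₂ _ _ ih => subst hγ; exact .conBullet n (.bullet Γ) Δ₁ Δ₂ β (ih rfl)
  | conF n Γ α _ hF _ ih => subst hγ; exact .conF n (.bullet Γ) α β hF (ih rfl)
  | conA n Γ α _ hF hα _ ih => subst hγ; exact .conA n (.bullet Γ) α β hF hα (ih rfl)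
  | conBox n Γ α _ hF _ ih => subst hγ; exact .conBox n (.bullet Γ) α β hF (ih rfl)
  | conBBox n Γ α _ hF _ ih => subst hγ; exact .conBBox n (.bullet Γ) α β hF (ih rfl)
  | conImp n Γ α₁ α₂ _ hF _ ih => subst hγ; exact .conImp n (.bullet Γ) α₁ α₂ β hF (ih rfl)
  | wk₁ n Γ Δ₁ Δ₂ _ _ ih => subst hγ; exact .wk₁ n (.bullet Γ) Δ₁ Δ₂ β (ih rfl)
  | wk₂ n Γ Δ₁ Δ₂ _ _ ih => subst hγ; exact .wk₂ n (.bullet Γ) Δ₁ Δ₂ β (ih rfl)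
  | ex n Γ Δ₁ Δ₂ _ _ ih => subst hγ; exact .ex n (.bullet Γ) Δ₁ Δ₂ β (ih rfl)
  | dualCB n Γ Δ₁ Δ₂ _ hp => subst hγ; exact .dualCB n (.bullet Γ) Δ₁ Δ₂ β hp
  | dualBC n Γ Δ₁ Δ₂ _ hp => subst hγ; exact .dualBC n (.bullet Γ) Δ₁ Δ₂ β hp
  | cut n Γ Δ α _ hC hp _ _ ih => subst hγ; exact .cut n (.bullet Γ) Δ α β hC hp (ih rfl)
  | mixA n Γ Δ α _ hM hα hΓ hp _ _ ih =>
    subst hγ; exact .mixA n (.bullet Γ) Δ α β hM hα hΓ hp (ih rfl)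
  | mixBox n Γ Δ α _ hM hΓ hp _ _ ih =>
    subst hγ; exact .mixBox n (.bullet Γ) Δ α β hM hΓ hp (ih rfl)
  | mixBBox n Γ Δ α _ hM hΓ hp _ _ ih =>
    subst hγ; exact .mixBBox n (.bullet Γ) Δ α β hM hΓ hp (ih rfl)
  | mixImp n Γ Δ α₁ α₂ _ hM hΓ hp _ _ ih =>
    subst hγ; exact .mixImp n (.bullet Γ) Δ α₁ α₂ β hM hΓ hp (ih rfl)
  | cutStar n Γ Δ α _ hM hα hp _ _ ih =>
    subst hγ; exact .cutStar n (.bullet Γ) Δ α β hM hα hp (ih rfl)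

/-- height-preserving invertibility of (□R) in cut-free GwIKt†. -/
theorem stmt9_boxR_invertible :
    ∀ n : ℕ, 1 ≤ n → ∀ (Γ : FS) (β : Fml),
      DerH GwIKtDCF n Γ β.box → DerH GwIKtDCF n (.bullet Γ) β :=
  fun _ _ _ _ h => h.inv_boxR rfl
end

section
/- In the cut-free calculus GwIKt†, the right black-box rule is height-preserving invertible: for all n ≥ 1, if Γ ⇒ ■β is derivable with height n, then ∘Γ ⇒ β is derivable with height at most n. -/
-- With the unrestricted identity axiom `■β ⇒ ■β`, the inverse `∘■β ⇒ β` needs one more step.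
theorem DerH.bboxR_inv {R : Rules} (hR : R.idFull = false) {n : ℕ} {Γ : FS} {β : Fml}
    (h : DerH R n Γ β.bbox) : DerH R n (.circ Γ) β := by
  generalize hδ : β.bbox = δ at h
  induction h generalizing β with
  | idA _ _ _ hα => subst hδ; exact hα.elim
  | idF _ _ hR' => simp [hR] at hR'
  | bboxR _ _ _ h => cases hδ; exact h.succ
  | andR | orR₁ | orR₂ | impR | diaR | bdiaR | boxR => cases hδ
  | botL n Γ Δ _ h => exact .botL n (.circ Γ) Δ β h
  | dualCB n Γ Δ₁ Δ₂ _ h => exact .dualCB n (.circ Γ) Δ₁ Δ₂ β h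
  | dualBC n Γ Δ₁ Δ₂ _ h => exact .dualBC n (.circ Γ) Δ₁ Δ₂ β h
  | topL n Γ Δ _ _ ih => exact .topL n (.circ Γ) Δ β (ih hδ)
  | andL n Γ α₁ α₂ _ _ ih => exact .andL n (.circ Γ) α₁ α₂ β (ih hδ)
  | orL n Γ α₁ α₂ _ _ _ ih₁ ih₂ => exact .orL n (.circ Γ) α₁ α₂ β (ih₁ hδ) (ih₂ hδ)
  | impL n Γ Δ α₁ α₂ _ h _ _ ih => exact .impL n (.circ Γ) Δ α₁ α₂ β h (ih hδ)
  | diaL n Γ α _ _ ih => exact .diaL n (.circ Γ) α β (ih hδ)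
  | bdiaL n Γ α _ _ ih => exact .bdiaL n (.circ Γ) α β (ih hδ)
  | bboxL n Γ α _ _ ih => exact .bboxL n (.circ Γ) α β (ih hδ)
  | boxL n Γ α _ _ ih => exact .boxL n (.circ Γ) α β (ih hδ)
  | conCirc n Γ Δ₁ Δ₂ _ _ ih => exact .conCirc n (.circ Γ) Δ₁ Δ₂ β (ih hδ)
  | conBullet n Γ Δ₁ Δ₂ _ _ ih => exact .conBullet n (.circ Γ) Δ₁ Δ₂ β (ih hδ)
  | conF n Γ α _ hc _ ih => exact .conF n (.circ Γ) α β hc (ih hδ)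
  | conA n Γ α _ hc hα _ ih => exact .conA n (.circ Γ) α β hc hα (ih hδ)
  | conBox n Γ α _ hc _ ih => exact .conBox n (.circ Γ) α β hc (ih hδ)
  | conBBox n Γ α _ hc _ ih => exact .conBBox n (.circ Γ) α β hc (ih hδ)
  | conImp n Γ α₁ α₂ _ hc _ ih => exact .conImp n (.circ Γ) α₁ α₂ β hc (ih hδ)
  | wk₁ n Γ Δ₁ Δ₂ _ _ ih => exact .wk₁ n (.circ Γ) Δ₁ Δ₂ β (ih hδ)
  | wk₂ n Γ Δ₁ Δ₂ _ _ ih => exact .wk₂ n (.circ Γ) Δ₁ Δ₂ β (ih hδ)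
  | ex n Γ Δ₁ Δ₂ _ _ ih => exact .ex n (.circ Γ) Δ₁ Δ₂ β (ih hδ)
  | cut n Γ Δ α _ hc h _ _ ih => exact .cut n (.circ Γ) Δ α β hc h (ih hδ)
  | mixA n Γ Δ α _ hm hα hΓ h _ _ ih => exact .mixA n (.circ Γ) Δ α β hm hα hΓ h (ih hδ)
  | mixBox n Γ Δ α _ hm hΓ h _ _ ih => exact .mixBox n (.circ Γ) Δ α β hm hΓ h (ih hδ)
  | mixBBox n Γ Δ α _ hm hΓ h _ _ ih => exact .mixBBox n (.circ Γ) Δ α β hm hΓ h (ih hδ)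
  | mixImp n Γ Δ α₁ α₂ _ hm hΓ h _ _ ih =>
      exact .mixImp n (.circ Γ) Δ α₁ α₂ β hm hΓ h (ih hδ)
  | cutStar n Γ Δ α _ hm hα h _ _ ih => exact .cutStar n (.circ Γ) Δ α β hm hα h (ih hδ)

/-- height-preserving invertibility of (■R) in cut-free GwIKt†. -/
theorem stmt10_bboxR_invertible :
    ∀ n : ℕ, 1 ≤ n → ∀ (Γ : FS) (β : Fml),
      DerH GwIKtDCF n Γ β.bbox → DerH GwIKtDCF n (.circ Γ) β :=
  fun _ _ _ _ h => h.bboxR_inv rfl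
end
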